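/- In the uniform-kernel setting, under assumption (A3), let Z denote a random variable with density f_v(x) g(v)/∫ f_u(x) g(u) du on ℝ, and assume E(l(Z)) = 0 and 0 < E(l²(Z)) < ∞. Then, as λ → 0, γ_x(λ) = (λ²/(2 E(l²(Z)))) · (∫ f_v(x) g(v) dv) · (1 + o(1)), where γ_x(λ) = ∫ (1 − exp{V_x^{-1}(λ)(l(v) − λ)}) f_v(x) g(v) dv for v_0(x) < λ < v_1(x). -/

import Mathlib

set_option autoImplicit false

open MeasureTheory Filter Set

open Asymptotics Topology Real ProbabilityTheory

/-! Let `μ` be the measure with density `f g` and `K` the cumulant generating function of `l`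
under `μ`, so that `V = K'`. For `s = V⁻¹(λ)` one has
`γ(λ) = e^{K(0)} (1 - e^{K(s) - K(0) - s K'(s)})`. Since `K` is analytic with `K'(0) = E l(Z) = 0`
and `K''(0) = E l²(Z) > 0`, the exponent is `-K''(0) s² / 2 + o(s²)` while
`λ = K'(s) = K''(0) s + o(s)`, which gives the claim; `s → 0` as `λ → 0` because `K'` is monotone
with positive slope at `0`. -/

section WithDensity

variable {α : Type*} [MeasurableSpace α] {ν : Measure α} {w : α → ℝ}

theorem integral_withDensity_ofReal_eq_integral_mul (hw : AEMeasurable w ν)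
    (hw0 : ∀ᵐ x ∂ν, 0 ≤ w x) (h : α → ℝ) :
    ∫ x, h x ∂ν.withDensity (fun x => ENNReal.ofReal (w x)) = ∫ x, h x * w x ∂ν := by
  rw [integral_withDensity_eq_integral_toReal_smul₀ hw.ennreal_ofReal
    (.of_forall fun _ => ENNReal.ofReal_lt_top)]
  refine integral_congr_ae ?_
  filter_upwards [hw0] with x hx
  rw [ENNReal.toReal_ofReal hx, smul_eq_mul, mul_comm]

theorem integrable_withDensity_ofReal_iff (hw : AEMeasurable w ν) (hw0 : ∀ᵐ x ∂ν, 0 ≤ w x)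
    {h : α → ℝ} :
    Integrable h (ν.withDensity fun x => ENNReal.ofReal (w x)) ↔
      Integrable (fun x => h x * w x) ν := by
  rw [integrable_withDensity_iff_integrable_smul₀' hw.ennreal_ofReal
    (.of_forall fun _ => ENNReal.ofReal_lt_top)]
  refine integrable_congr ?_
  filter_upwards [hw0] with x hx
  rw [ENNReal.toReal_ofReal hx, smul_eq_mul, mul_comm]

end WithDensity

theorem Monotone.apply_csInf_setOf_le_apply_eq {V : ℝ → ℝ} (hmono : Monotone V)
    (hcont : Continuous V) {a b y : ℝ} (ha : V a < y) (hb : y < V b) :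
    V (sInf {s | y ≤ V s}) = y := by
  have hne : {s | y ≤ V s}.Nonempty := ⟨b, hb.le⟩
  have hbdd : BddBelow {s | y ≤ V s} :=
    ⟨a, fun s hs => (hmono.reflect_lt (ha.trans_le hs)).le⟩
  obtain ⟨c, -, hc⟩ := intermediate_value_Icc (hmono.reflect_lt (ha.trans hb)).le
    hcont.continuousOn ⟨ha.le, hb.le⟩
  refine le_antisymm ?_ ((isClosed_le continuous_const hcont).csInf_mem hne hbdd)
  calc V (sInf {s | y ≤ V s}) ≤ V c := hmono (csInf_le hbdd hc.ge)
    _ = y := hc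

theorem Monotone.tendsto_nhdsNE_of_apply_eq {V U : ℝ → ℝ} {S : Set ℝ} {a c : ℝ}
    (hmono : Monotone V) (hV : HasDerivAt V c a) (hc : 0 < c) (hU : ∀ y ∈ S, V (U y) = y) :
    Tendsto U (𝓝[S \ {V a}] V a) (𝓝[≠] a) := by
  have hslope : ∀ᶠ t in 𝓝[≠] a, 0 < slope V a t :=
    (hasDerivAt_iff_tendsto_slope.mp hV).eventually (eventually_gt_nhds hc)
  refine tendsto_nhdsWithin_iff.mpr ⟨tendsto_order.mpr ⟨fun a' ha' => ?_, fun b' hb' => ?_⟩, ?_⟩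
  · obtain ⟨t, ht, hta⟩ := ((hslope.filter_mono (nhdsLT_le_nhdsNE a)).and
      (Ioo_mem_nhdsLT ha')).exists
    have hVt : V t < V a := by
      rw [slope_comm, slope_def_field] at ht
      exact sub_pos.mp ((div_pos_iff_of_pos_right (sub_pos.mpr hta.2)).mp ht)
    filter_upwards [(eventually_gt_nhds hVt).filter_mono nhdsWithin_le_nhds,
      self_mem_nhdsWithin] with y hy hyS
    exact hta.1.trans (hmono.reflect_lt (by rwa [hU y hyS.1]))
  · obtain ⟨t, ht, hta⟩ := ((hslope.filter_mono (nhdsGT_le_nhdsNE a)).and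
      (Ioo_mem_nhdsGT hb')).exists
    have hVt : V a < V t := by
      rw [slope_def_field] at ht
      exact sub_pos.mp ((div_pos_iff_of_pos_right (sub_pos.mpr hta.1)).mp ht)
    filter_upwards [(eventually_lt_nhds hVt).filter_mono nhdsWithin_le_nhds,
      self_mem_nhdsWithin] with y hy hyS
    exact (hmono.reflect_lt (by rwa [hU y hyS.1])).trans hta.2
  · filter_upwards [self_mem_nhdsWithin] with y hy hUy
    exact hy.2 (hU y hy.1 ▸ congrArg V hUy)

theorem tendsto_exp_sub_one_div {α : Type*} {l : Filter α} {u q : α → ℝ} {a : ℝ}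
    (hu : Tendsto u l (𝓝 0)) (h : Tendsto (fun x => u x / q x) l (𝓝 a)) :
    Tendsto (fun x => (exp (u x) - 1) / q x) l (𝓝 a) := by
  have hexp : (fun x => exp x - 1) ~[𝓝 0] id :=
    (by simpa using (hasDerivAt_exp 0).isLittleO :
      (fun x => exp x - 1 - x) =o[𝓝 0] fun x => x).isEquivalent
  exact ((hexp.comp_tendsto hu).div (IsEquivalent.refl (u := q))).symm.tendsto_nhds h

theorem tendsto_div_of_hasDerivAt_zero {f : ℝ → ℝ} {c : ℝ} (hf : HasDerivAt f c 0)
    (h0 : f 0 = 0) : Tendsto (fun s => f s / s) (𝓝[≠] 0) (𝓝 c) :=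
  (hasDerivAt_iff_tendsto_slope.mp hf).congr fun s => by
    rw [slope_def_field, h0, sub_zero, sub_zero]

section SecondOrder

variable {K K' : ℝ → ℝ} {c : ℝ}

theorem tendsto_sub_div_sq_of_hasDerivAt (hK : ∀ᶠ s in 𝓝 0, HasDerivAt K (K' s) s)
    (hK' : HasDerivAt K' c 0) (h0 : K' 0 = 0) :
    Tendsto (fun s => (K s - K 0) / s ^ 2) (𝓝[≠] 0) (𝓝 (c / 2)) := by
  have hslope := tendsto_div_of_hasDerivAt_zero hK' h0
  refine HasDerivAt.lhopital_zero_nhdsNE (f' := K') (g' := fun s => 2 * s)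
    ((hK.mono fun s hs => hs.sub_const (K 0)).filter_mono nhdsWithin_le_nhds)
    (.of_forall fun s => by simpa using hasDerivAt_pow 2 s) ?_ ?_ ?_ ?_
  · filter_upwards [self_mem_nhdsWithin] with s hs
    exact mul_ne_zero two_ne_zero hs
  · have := hK.self_of_nhds.continuousAt.tendsto
    simpa using (this.sub_const (K 0)).mono_left nhdsWithin_le_nhds
  · simpa using ((continuous_pow 2).tendsto' (0 : ℝ) 0 (by simp)).mono_left nhdsWithin_le_nhds
  · refine (hslope.div_const 2).congr fun s => ?_
    ring

-- `s K'(s) - (K(s) - K(0))` is the Legendre transform of `K - K(0)` at `K'(s)`.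
theorem tendsto_legendre_div_sq (hK : ∀ᶠ s in 𝓝 0, HasDerivAt K (K' s) s)
    (hK' : HasDerivAt K' c 0) (h0 : K' 0 = 0) :
    Tendsto (fun s => (K s - K 0 - s * K' s) / s ^ 2) (𝓝[≠] 0) (𝓝 (-(c / 2))) := by
  have hslope := tendsto_div_of_hasDerivAt_zero hK' h0
  have h := (tendsto_sub_div_sq_of_hasDerivAt hK hK' h0).sub hslope
  rw [show c / 2 - c = -(c / 2) by ring] at h
  refine h.congr' ?_
  filter_upwards [self_mem_nhdsWithin] with s (hs : s ≠ 0)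
  field_simp

theorem tendsto_one_sub_exp_legendre_div (hK : ∀ᶠ s in 𝓝 0, HasDerivAt K (K' s) s)
    (hK' : HasDerivAt K' c 0) (h0 : K' 0 = 0) (hc : 0 < c) :
    Tendsto (fun s => (1 - exp (K s - K 0 - s * K' s)) / (K' s ^ 2 / (2 * c)))
      (𝓝[≠] 0) (𝓝 1) := by
  have hslope := tendsto_div_of_hasDerivAt_zero hK' h0
  have hΛ : Tendsto (fun s => K s - K 0 - s * K' s) (𝓝[≠] 0) (𝓝 0) := by
    have hKc := hK.self_of_nhds.continuousAt
    have hK'c := hK'.continuousAt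
    have : ContinuousAt (fun s => K s - K 0 - s * K' s) 0 := by fun_prop
    simpa using this.tendsto.mono_left nhdsWithin_le_nhds
  have h := (((tendsto_exp_sub_one_div hΛ (tendsto_legendre_div_sq hK hK' h0)).neg).mul_const
    (2 * c)).div (hslope.pow 2) (by positivity)
  rw [show -(-(c / 2)) * (2 * c) / c ^ 2 = 1 by field_simp] at h
  refine h.congr' ?_
  filter_upwards [self_mem_nhdsWithin] with s (hs : s ≠ 0)
  simp only [Pi.div_apply]
  field_simp
  ring

end SecondOrder

section CumulantGeneratingFunction

variable {Ω : Type*} {m : MeasurableSpace Ω} {X : Ω → ℝ} {μ : Measure Ω}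

theorem hasDerivAt_deriv_cgf {t : ℝ} (ht : t ∈ interior (integrableExpSet X μ)) :
    HasDerivAt (deriv (cgf X μ)) (iteratedDeriv 2 (cgf X μ) t) t := by
  rw [iteratedDeriv_succ, iteratedDeriv_one]
  exact (analyticAt_cgf ht).deriv.differentiableAt.hasDerivAt

theorem monotoneOn_deriv_cgf : MonotoneOn (deriv (cgf X μ)) (interior (integrableExpSet X μ)) := by
  refine monotoneOn_of_hasDerivWithinAt_nonneg convex_integrableExpSet.interior
    (fun t ht => (hasDerivAt_deriv_cgf ht).continuousAt.continuousWithinAt)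
    (fun t ht => (hasDerivAt_deriv_cgf (interior_subset ht)).hasDerivWithinAt) fun t ht => ?_
  rw [← variance_tilted_mul (interior_subset ht)]
  exact variance_nonneg _ _

theorem interior_integrableExpSet_eq_univ (h : ∀ t, Integrable (fun ω => exp (t * X ω)) μ) :
    interior (integrableExpSet X μ) = univ := by
  rw [interior_eq_univ]
  exact eq_univ_of_forall h

theorem monotone_deriv_cgf (h : ∀ t, Integrable (fun ω => exp (t * X ω)) μ) :
    Monotone (deriv (cgf X μ)) :=
  monotoneOn_univ.mp (interior_integrableExpSet_eq_univ h ▸ monotoneOn_deriv_cgf)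

theorem deriv_cgf_csInf_setOf_le_eq (h : ∀ t, Integrable (fun ω => exp (t * X ω)) μ)
    {a b y : ℝ} (ha : deriv (cgf X μ) a < y) (hb : y < deriv (cgf X μ) b) :
    deriv (cgf X μ) (sInf {s | y ≤ deriv (cgf X μ) s}) = y := by
  have hint (t : ℝ) := interior_integrableExpSet_eq_univ h ▸ mem_univ t
  exact (monotone_deriv_cgf h).apply_csInf_setOf_le_apply_eq
    (continuous_iff_continuousAt.mpr fun t => (hasDerivAt_deriv_cgf (hint t)).continuousAt) ha hb

theorem integral_one_sub_exp_mul_sub (h : ∀ t, Integrable (fun ω => exp (t * X ω)) μ)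
    (hμ : μ ≠ 0) (s y : ℝ) :
    μ[fun ω => 1 - exp (s * (X ω - y))] =
      μ.real univ * (1 - exp (cgf X μ s - cgf X μ 0 - s * y)) := by
  have hmgf (t : ℝ) : exp (cgf X μ t) = mgf X μ t := exp_log (mgf_pos' hμ (h t))
  have hsplit : (fun ω => 1 - exp (s * (X ω - y))) =
      fun ω => exp (0 * X ω) - exp (-(s * y)) * exp (s * X ω) := by
    ext ω
    rw [zero_mul, exp_zero, ← exp_add]
    ring_nf
  rw [hsplit, integral_sub (h 0) ((h s).const_mul _), integral_const_mul, ← mgf, ← mgf,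
    ← mgf_zero' (X := X), ← hmgf, ← hmgf, mul_sub, mul_one, ← exp_add, ← exp_add]
  congr 2
  ring

theorem tendsto_integral_one_sub_exp_div (h : ∀ t, Integrable (fun ω => exp (t * X ω)) μ)
    (hμ : μ ≠ 0) (hmean : μ[X] = 0) {σ2 : ℝ} (hσ2 : μ[fun ω => X ω ^ 2] / μ.real univ = σ2)
    (hσ : 0 < σ2) {U : ℝ → ℝ} {S : Set ℝ} (hU : ∀ y ∈ S, deriv (cgf X μ) (U y) = y) :
    Tendsto (fun y => μ[fun ω => 1 - exp (U y * (X ω - y))] / (y ^ 2 / (2 * σ2) * μ.real univ))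
      (𝓝[S \ {0}] 0) (𝓝 1) := by
  have hint (t : ℝ) := interior_integrableExpSet_eq_univ h ▸ mem_univ t
  have hV0 : deriv (cgf X μ) 0 = 0 := by rw [deriv_cgf_zero (hint 0), hmean, zero_div]
  have hdV : HasDerivAt (deriv (cgf X μ)) σ2 0 := by
    convert hasDerivAt_deriv_cgf (hint 0) using 1
    rw [iteratedDeriv_two_cgf (hint 0), hV0, mgf_zero', ← hσ2]
    simp
  have hlim := (tendsto_one_sub_exp_legendre_div
    (.of_forall fun t => (analyticAt_cgf (hint t)).differentiableAt.hasDerivAt) hdV hV0 hσ).comp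
    (hV0 ▸ (monotone_deriv_cgf h).tendsto_nhdsNE_of_apply_eq hdV hσ hU)
  refine hlim.congr' ?_
  filter_upwards [self_mem_nhdsWithin] with y hy
  have hμ0 : 0 < μ.real univ := by simpa [mgf_zero'] using mgf_pos' hμ (h 0)
  rw [Function.comp_apply, hU y hy.1, integral_one_sub_exp_mul_sub h hμ, mul_comm (y ^ 2 / _),
    mul_div_mul_left _ _ hμ0.ne']

end CumulantGeneratingFunction

theorem gamma_taylor_expansion_at_zero_general
    (l : ℝ → ℝ)
    (g : ℝ → ℝ) (hg_nonneg : ∀ v, 0 ≤ g v)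
    (f : ℝ → ℝ) (hf_nonneg : ∀ v, 0 ≤ f v)
    (hfg_pos : 0 < ∫ v, f v * g v)
    -- (A3)
    (hA3ii : ∀ a : ℝ, Integrable (fun v => Real.exp (a * l v) * f v * g v))
    -- V_x, its generalized inverse, and the bounds v₀(x), v₁(x)
    (V : ℝ → ℝ)
    (hV : ∀ t, V t = (∫ u, Real.exp (t * l u) * l u * f u * g u) /
      (∫ v, Real.exp (t * l v) * f v * g v))
    (Vinv : ℝ → ℝ) (hVinv : ∀ t, Vinv t = sInf {s | t ≤ V s})
    (v₀ v₁ : EReal) (hv₀ : v₀ = ⨅ t : ℝ, (V t : EReal)) (hv₁ : v₁ = ⨆ t : ℝ, (V t : EReal))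
    -- the explicit rate function of the uniform-kernel case
    (γ : ℝ → ℝ)
    (hγ : ∀ lam : ℝ, γ lam = ∫ v, (1 - Real.exp (Vinv lam * (l v - lam))) * f v * g v)
    -- moments of Z, the random variable with density f_v(x) g(v) / ∫ f_u(x) g(u) du
    (EZl EZl2 : ℝ)
    (hEZl : EZl = (∫ v, l v * f v * g v) / (∫ v, f v * g v))
    (hEZl2 : EZl2 = (∫ v, (l v) ^ 2 * f v * g v) / (∫ v, f v * g v))
    (hEZl0 : EZl = 0) (hEZl2pos : 0 < EZl2) :
    Tendsto (fun lam : ℝ => γ lam / (lam ^ 2 / (2 * EZl2) * ∫ v, f v * g v))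
      (nhdsWithin 0 ({lam : ℝ | v₀ < (lam : EReal) ∧ (lam : EReal) < v₁} \ {0}))
      (nhds 1) := by
  set μ : Measure ℝ := volume.withDensity fun v => ENNReal.ofReal (f v * g v)
  have hw : AEMeasurable (fun v => f v * g v) := by simpa using (hA3ii 0).aemeasurable
  have hw0 : ∀ᵐ v, 0 ≤ f v * g v := .of_forall fun v => mul_nonneg (hf_nonneg v) (hg_nonneg v)
  have hμ (h : ℝ → ℝ) : ∫ v, h v ∂μ = ∫ v, h v * f v * g v := by
    rw [integral_withDensity_ofReal_eq_integral_mul hw hw0]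
    simp_rw [mul_assoc]
  have hexp (t : ℝ) : Integrable (fun v => exp (t * l v)) μ :=
    (integrable_withDensity_ofReal_iff hw hw0).mpr (by simpa only [mul_assoc] using hA3ii t)
  have hμ1 : μ.real univ = ∫ v, f v * g v := by
    simpa [hμ] using (integral_const (μ := μ) (1 : ℝ)).symm
  have hμ0 : μ ≠ 0 := fun h0 => hfg_pos.ne (by simp [← hμ1, h0])
  have hVK : V = deriv (cgf l μ) := funext fun t => by
    rw [hV, deriv_cgf (interior_integrableExpSet_eq_univ hexp ▸ mem_univ t), mgf, hμ, hμ]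
    congr 2
    ext u
    ring
  have hmean : μ[l] = 0 := by
    rw [hμ, ← div_eq_zero_iff.mp (hEZl ▸ hEZl0) |>.resolve_right hfg_pos.ne']
  have hσ2 : μ[fun v => l v ^ 2] / μ.real univ = EZl2 := by rw [hμ, hμ1, hEZl2]
  have hVinvV : ∀ lam ∈ {lam : ℝ | v₀ < (lam : EReal) ∧ (lam : EReal) < v₁},
      deriv (cgf l μ) (Vinv lam) = lam := by
    rintro lam ⟨h₀, h₁⟩
    obtain ⟨a, ha⟩ := iInf_lt_iff.mp (hv₀ ▸ h₀)
    obtain ⟨b, hb⟩ := lt_iSup_iff.mp (hv₁ ▸ h₁)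
    rw [hVinv, hVK]
    exact deriv_cgf_csInf_setOf_le_eq hexp (hVK ▸ EReal.coe_lt_coe_iff.mp ha)
      (hVK ▸ EReal.coe_lt_coe_iff.mp hb)
  refine (tendsto_integral_one_sub_exp_div hexp hμ0 hmean hσ2 hEZl2pos hVinvV).congr fun lam => ?_
  rw [hγ, hμ, hμ1]

theorem gamma_taylor_expansion_at_zero
    (l : ℝ → ℝ) (hl : Measurable l)
    (g : ℝ → ℝ) (hg_nonneg : ∀ v, 0 ≤ g v) (hg_prob : ∫ v, g v = 1)
    (f : ℝ → ℝ) (hf_nonneg : ∀ v, 0 ≤ f v)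
    (hfg_pos : 0 < ∫ v, f v * g v)
    -- (A3)
    (hA3i : ∀ a b : ℝ, Integrable (fun v => (Real.exp (a + b * l v) - 1) * f v * g v))
    (hA3ii : ∀ a : ℝ, Integrable (fun v => Real.exp (a * l v) * f v * g v))
    (hA3iii : ∀ a : ℝ, Integrable (fun v => Real.exp (a * l v) * f v * g v * l v))
    (hA3iv : ∀ a : ℝ, Integrable (fun v => Real.exp (a * l v) * f v * g v * (l v) ^ 2))
    -- V_x, its generalized inverse, and the bounds v₀(x), v₁(x)
    (V : ℝ → ℝ)
    (hV : ∀ t, V t = (∫ u, Real.exp (t * l u) * l u * f u * g u) /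
      (∫ v, Real.exp (t * l v) * f v * g v))
    (Vinv : ℝ → ℝ) (hVinv : ∀ t, Vinv t = sInf {s | t ≤ V s})
    (v₀ v₁ : EReal) (hv₀ : v₀ = ⨅ t : ℝ, (V t : EReal)) (hv₁ : v₁ = ⨆ t : ℝ, (V t : EReal))
    -- the explicit rate function of the uniform-kernel case
    (γ : ℝ → ℝ)
    (hγ : ∀ lam : ℝ, γ lam = ∫ v, (1 - Real.exp (Vinv lam * (l v - lam))) * f v * g v)
    -- moments of Z, the random variable with density f_v(x) g(v) / ∫ f_u(x) g(u) du
    (EZl EZl2 : ℝ)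
    (hEZl : EZl = (∫ v, l v * f v * g v) / (∫ v, f v * g v))
    (hEZl2 : EZl2 = (∫ v, (l v) ^ 2 * f v * g v) / (∫ v, f v * g v))
    (hEZl0 : EZl = 0) (hEZl2pos : 0 < EZl2) :
    Tendsto (fun lam : ℝ => γ lam / (lam ^ 2 / (2 * EZl2) * ∫ v, f v * g v))
      (nhdsWithin 0 ({lam : ℝ | v₀ < (lam : EReal) ∧ (lam : EReal) < v₁} \ {0}))
      (nhds 1) :=
  gamma_taylor_expansion_at_zero_general l g hg_nonneg f hf_nonneg hfg_pos hA3ii V hV Vinv hVinv v₀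
    v₁ hv₀ hv₁ γ hγ EZl EZl2 hEZl hEZl2 hEZl0 hEZl2pos
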